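/- Consider an IDV social choice setting in which every valuation v_i is differentiable in its own signal s_i, and let f : S → Δ(𝒜) be a randomized social choice function that is differentiable in each coordinate s_i. Then f satisfies cycle monotonicity (C-Mon) if and only if the profile v satisfies weak f-single-crossing. -/

import Mathlib

open Finset

noncomputable section

/-- The signal profile lies in the signal space `[0,1]^n`. -/
def InSig {n : ℕ} (s : Fin n → ℝ) : Prop := ∀ i, s i ∈ Set.Icc (0 : ℝ) 1

/-- Expected value `⟨u, d⟩ = ∑ a, d a · u a` of the vector `u` under the distribution `d`. -/
def expVal {A : Type*} [Fintype A] (u d : A → ℝ) : ℝ := ∑ a, d a * u a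

variable {n : ℕ} {A : Type*} [Fintype A]

/-- Valuations are nonnegative and nondecreasing in every signal coordinate. -/
def ValidVals (v : Fin n → A → (Fin n → ℝ) → ℝ) : Prop :=
  (∀ i a (s : Fin n → ℝ), InSig s → 0 ≤ v i a s) ∧
  (∀ i a (j : Fin n) (s : Fin n → ℝ), InSig s → ∀ t t' : ℝ, t ∈ Set.Icc (0 : ℝ) 1 →
    t' ∈ Set.Icc (0 : ℝ) 1 → t ≤ t' →
    v i a (Function.update s j t) ≤ v i a (Function.update s j t'))

/-- `f` maps every signal profile to a probability distribution over the alternatives. -/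
def IsDistr (f : (Fin n → ℝ) → A → ℝ) : Prop :=
  ∀ s : Fin n → ℝ, InSig s → (∀ a, 0 ≤ f s a) ∧ ∑ a, f s a = 1

/-- `dv i a s` is the derivative of `v i a` with respect to agent `i`'s own signal at `s`. -/
def IsOwnDeriv (v dv : Fin n → A → (Fin n → ℝ) → ℝ) : Prop :=
  ∀ i a (s : Fin n → ℝ), InSig s →
    HasDerivWithinAt (fun t => v i a (Function.update s i t)) (dv i a s)
      (Set.Icc (0 : ℝ) 1) (s i)

/-- `df i s a` is the derivative of `s ↦ f s a` with respect to agent `i`'s signal at `s`. -/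
def IsOwnDerivF (f : (Fin n → ℝ) → A → ℝ) (df : Fin n → (Fin n → ℝ) → A → ℝ) : Prop :=
  ∀ i (s : Fin n → ℝ) a, InSig s →
    HasDerivWithinAt (fun t => f (Function.update s i t) a) (df i s a)
      (Set.Icc (0 : ℝ) 1) (s i)

/-- The profile `v` satisfies weak `f`-single-crossing: for all `i`, `s` and `z ∈ Sᵢ`,
`⟨vᵢ(z, s₋ᵢ) − vᵢ(s), f(z, s₋ᵢ)⟩ ≥ ∫_{sᵢ}^{z} ⟨∂vᵢ/∂sᵢ(t, s₋ᵢ), f(t, s₋ᵢ)⟩ dt`. -/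
def WeakFSC (v dv : Fin n → A → (Fin n → ℝ) → ℝ) (f : (Fin n → ℝ) → A → ℝ) : Prop :=
  ∀ i (s : Fin n → ℝ), InSig s → ∀ z ∈ Set.Icc (0 : ℝ) 1,
    expVal (fun a => v i a (Function.update s i z) - v i a s) (f (Function.update s i z)) ≥
      ∫ t in (s i)..z,
        expVal (fun a => dv i a (Function.update s i t)) (f (Function.update s i t))

/-- `f` satisfies cycle monotonicity (C-Mon): for every agent `i`, every `s₋ᵢ`, every
`ℓ ≥ 2`, and all signals `σ 0, …, σ ℓ` in `Sᵢ` with `σ ℓ = σ 0`,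
`∑_{k<ℓ} ⟨vᵢ(σ k, s₋ᵢ), f(σ k, s₋ᵢ) − f(σ (k+1), s₋ᵢ)⟩ ≥ 0`. -/
def CMon (v : Fin n → A → (Fin n → ℝ) → ℝ) (f : (Fin n → ℝ) → A → ℝ) : Prop :=
  ∀ i (s : Fin n → ℝ), InSig s → ∀ ℓ : ℕ, 2 ≤ ℓ → ∀ σ : ℕ → ℝ,
    (∀ k ≤ ℓ, σ k ∈ Set.Icc (0 : ℝ) 1) → σ ℓ = σ 0 →
    ∑ k ∈ Finset.range ℓ,
      expVal (fun a => v i a (Function.update s i (σ k)))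
        (fun a => f (Function.update s i (σ k)) a - f (Function.update s i (σ (k + 1))) a)
      ≥ 0

/-!
Fix an agent `i` and the other signals `s₋ᵢ`; everything happens on the line `t ↦ (t, s₋ᵢ)`,
with `V = vᵢ`, `F = f` along it. Abel summation turns the C-Mon sum of a cycle `σ` into the
right-tagged Stieltjes sum `∑ₖ ⟨V(σₖ₊₁) − V(σₖ), F(σₖ₊₁)⟩`. Weak single-crossing bounds each
term below by `∫_{σₖ}^{σₖ₊₁} ⟨V', F⟩`, and these integrals add up to `0` around the cycle.
Conversely, run from `z` to `x` through a uniform partition and jump back to `z`: C-Mon makes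
the Stieltjes sum of the path plus `⟨V(z) − V(x), F(z)⟩` nonnegative, and as the mesh shrinks
the Stieltjes sum tends to `∫_z^x ⟨V', F⟩`. The error of each step is at most
`ε · |ΔV|` once the mesh is below the modulus of uniform continuity of `F`, and since `V` is
monotone these add up to `ε · |V(x) − V(z)|`; monotonicity also makes `V' ≥ 0`, hence integrable.
-/
open Set MeasureTheory Filter Topology
open scoped Interval

theorem abs_mul_sub_integral_mul_le {V DV F : ℝ → ℝ} {p q ε : ℝ}
    (hV : ContinuousOn V (uIcc p q))
    (hDV : ∀ x ∈ Ioo (min p q) (max p q), HasDerivAt V (DV x) x)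
    (hDV₀ : ∀ x ∈ uIcc p q, 0 ≤ DV x) (hF : ContinuousOn F (uIcc p q))
    (hε : ∀ r ∈ uIcc p q, |F q - F r| ≤ ε) :
    |F q * (V q - V p) - ∫ r in p..q, F r * DV r| ≤ ε * |V q - V p| := by
  have hint : IntervalIntegrable DV volume p q :=
    intervalIntegral.intervalIntegrable_deriv_of_nonneg hV hDV
      fun x hx => hDV₀ x (Ioo_subset_Icc_self hx)
  have hftc : ∫ r in p..q, DV r = V q - V p :=
    intervalIntegral.integral_eq_sub_of_hasDeriv_right hV
      (fun x hx => (hDV x hx).hasDerivWithinAt) hint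
  have hε₀ : 0 ≤ ε := (abs_nonneg _).trans (hε q right_mem_uIcc)
  have hdiff : F q * (V q - V p) - ∫ r in p..q, F r * DV r =
      ∫ r in p..q, (F q - F r) * DV r := by
    rw [← hftc, ← intervalIntegral.integral_const_mul,
      ← intervalIntegral.integral_sub (hint.const_mul _) (hint.continuousOn_mul hF)]
    simp_rw [sub_mul]
  have hbound : ∀ᵐ r ∂volume.restrict (Ι p q), ‖(F q - F r) * DV r‖ ≤ ε * DV r := by
    refine (ae_restrict_iff' measurableSet_uIoc).2 (Eventually.of_forall fun r hr => ?_)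
    have hr : r ∈ uIcc p q := uIoc_subset_uIcc hr
    rw [Real.norm_eq_abs, abs_mul, abs_of_nonneg (hDV₀ r hr)]
    exact mul_le_mul_of_nonneg_right (hε r hr) (hDV₀ r hr)
  calc |F q * (V q - V p) - ∫ r in p..q, F r * DV r|
      ≤ |∫ r in p..q, ε * DV r| := by
        rw [hdiff]
        exact intervalIntegral.norm_integral_le_abs_of_norm_le hbound (hint.const_mul ε)
    _ = ε * |V q - V p| := by
        rw [intervalIntegral.integral_const_mul, hftc, abs_mul, abs_of_nonneg hε₀]

theorem MonotoneOn.sum_range_abs_sub_comp {V : ℝ → ℝ} {s : Set ℝ} (hV : MonotoneOn V s)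
    {σ : ℕ → ℝ} {m : ℕ} (hσs : ∀ k ≤ m, σ k ∈ s) (hσ : Monotone σ ∨ Antitone σ) :
    ∑ k ∈ range m, |V (σ (k + 1)) - V (σ k)| = |V (σ m) - V (σ 0)| := by
  rw [← Finset.sum_range_sub (fun k => V (σ k))]
  rcases hσ with hσ | hσ
  · have hstep : ∀ k ∈ range m, 0 ≤ V (σ (k + 1)) - V (σ k) := fun k hk =>
      sub_nonneg.2 (hV (hσs k (mem_range.1 hk).le) (hσs (k + 1) (mem_range.1 hk))
        (hσ k.le_succ))
    rw [abs_sum_of_nonneg hstep]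
    exact sum_congr rfl fun k hk => abs_of_nonneg (hstep k hk)
  · have hstep : ∀ k ∈ range m, 0 ≤ V (σ k) - V (σ (k + 1)) := fun k hk =>
      sub_nonneg.2 (hV (hσs (k + 1) (mem_range.1 hk)) (hσs k (mem_range.1 hk).le)
        (hσ k.le_succ))
    rw [← abs_neg, ← sum_neg_distrib]
    simp_rw [neg_sub]
    rw [abs_sum_of_nonneg hstep]
    exact sum_congr rfl fun k hk => by rw [abs_sub_comm, abs_of_nonneg (hstep k hk)]

theorem IsCompact.exists_forall_dist_le_of_continuousOn {ι X : Type*} [Finite ι]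
    [PseudoMetricSpace X] {s : Set X} (hs : IsCompact s) {F : ι → X → ℝ}
    (hF : ∀ a, ContinuousOn (F a) s) {ε : ℝ} (hε : 0 < ε) :
    ∃ δ > 0, ∀ a, ∀ t ∈ s, ∀ r ∈ s, dist t r ≤ δ → dist (F a t) (F a r) ≤ ε := by
  have := Fintype.ofFinite ι
  obtain ⟨δ, hδ, hmod⟩ := Metric.uniformContinuousOn_iff_le.1
    (hs.uniformContinuousOn_of_continuous (continuousOn_pi.2 hF)) ε hε
  exact ⟨δ, hδ, fun a t ht r hr htr =>
    (dist_le_pi_dist (fun b => F b t) (fun b => F b r) a).trans (hmod t ht r hr htr)⟩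

def uniformPartition (p q : ℝ) (m k : ℕ) : ℝ := p + k * ((q - p) / m)

@[simp] theorem uniformPartition_zero (p q : ℝ) (m : ℕ) : uniformPartition p q m 0 = p := by
  simp [uniformPartition]

theorem uniformPartition_self (p q : ℝ) {m : ℕ} (hm : m ≠ 0) : uniformPartition p q m m = q := by
  have : (m : ℝ) ≠ 0 := Nat.cast_ne_zero.2 hm
  simp only [uniformPartition]; field_simp; ring

theorem uniformPartition_succ_sub (p q : ℝ) (m k : ℕ) :
    uniformPartition p q m (k + 1) - uniformPartition p q m k = (q - p) / m := by
  simp only [uniformPartition]; push_cast; ring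

theorem uniformPartition_mem_uIcc (p q : ℝ) {m k : ℕ} (hk : k ≤ m) :
    uniformPartition p q m k ∈ uIcc p q := by
  rcases Nat.eq_zero_or_pos m with rfl | hm
  · simp [uniformPartition]
  have ht : (k / m : ℝ) ∈ Set.Icc 0 1 :=
    ⟨by positivity, div_le_one_of_le₀ (by exact_mod_cast hk) (Nat.cast_nonneg m)⟩
  convert (convex_uIcc p q).add_smul_sub_mem left_mem_uIcc right_mem_uIcc ht using 1
  simp only [uniformPartition, smul_eq_mul]; ring

theorem uniformPartition_monotone_or_antitone (p q : ℝ) (m : ℕ) :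
    Monotone (uniformPartition p q m) ∨ Antitone (uniformPartition p q m) := by
  rcases le_total p q with h | h
  · left
    intro k l hkl
    have : 0 ≤ (q - p) / m := div_nonneg (sub_nonneg.2 h) (Nat.cast_nonneg m)
    simp only [uniformPartition]; gcongr
  · right
    intro k l hkl
    have : (q - p) / m ≤ 0 := div_nonpos_of_nonpos_of_nonneg (sub_nonpos.2 h) (Nat.cast_nonneg m)
    simp only [uniformPartition]
    nlinarith [(Nat.cast_le (α := ℝ)).2 hkl]

section PerAlternative

variable {ι : Type*}

/-- `V a t`, `DV a t` and `F a t` stand for `vᵢ(a; t, s₋ᵢ)`, its derivative in `t`, and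
`f(t, s₋ᵢ)(a)`, for a fixed agent `i` and fixed signals `s₋ᵢ` of the others. -/
structure OwnSignalRegular (V DV F : ι → ℝ → ℝ) : Prop where
  monotoneOn_val : ∀ a, MonotoneOn (V a) (Set.Icc 0 1)
  hasDerivWithinAt_val :
    ∀ a, ∀ t ∈ Set.Icc (0 : ℝ) 1, HasDerivWithinAt (V a) (DV a t) (Set.Icc 0 1) t
  continuousOn_alloc : ∀ a, ContinuousOn (F a) (Set.Icc 0 1)

namespace OwnSignalRegular

variable {V DV F : ι → ℝ → ℝ}

theorem continuousOn_val (h : OwnSignalRegular V DV F) (a : ι) :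
    ContinuousOn (V a) (Set.Icc 0 1) :=
  fun t ht => (h.hasDerivWithinAt_val a t ht).continuousWithinAt

theorem hasDerivAt_val (h : OwnSignalRegular V DV F) (a : ι) {t : ℝ}
    (ht : t ∈ Set.Ioo (0 : ℝ) 1) : HasDerivAt (V a) (DV a t) t :=
  (h.hasDerivWithinAt_val a t (Ioo_subset_Icc_self ht)).hasDerivAt (Icc_mem_nhds ht.1 ht.2)

theorem deriv_nonneg (h : OwnSignalRegular V DV F) (a : ι) {t : ℝ}
    (ht : t ∈ Set.Icc (0 : ℝ) 1) : 0 ≤ DV a t :=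
  (h.hasDerivWithinAt_val a t ht).nonneg_of_monotoneOn
    (uniqueDiffOn_Icc zero_lt_one t ht).accPt (h.monotoneOn_val a)

theorem abs_mul_sub_integral_le (h : OwnSignalRegular V DV F) (a : ι) {p q ε : ℝ}
    (hp : p ∈ Set.Icc (0 : ℝ) 1) (hq : q ∈ Set.Icc (0 : ℝ) 1)
    (hε : ∀ r ∈ uIcc p q, |F a q - F a r| ≤ ε) :
    |F a q * (V a q - V a p) - ∫ t in p..q, F a t * DV a t| ≤ ε * |V a q - V a p| := by
  have hsub : uIcc p q ⊆ Set.Icc 0 1 := uIcc_subset_Icc hp hq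
  exact abs_mul_sub_integral_mul_le ((h.continuousOn_val a).mono hsub)
    (fun x hx => h.hasDerivAt_val a
      (Ioo_subset_Ioo (le_min hp.1 hq.1) (max_le hp.2 hq.2) hx))
    (fun x hx => h.deriv_nonneg a (hsub hx)) ((h.continuousOn_alloc a).mono hsub) hε

theorem intervalIntegrable_mul (h : OwnSignalRegular V DV F) (a : ι) {p q : ℝ}
    (hp : p ∈ Set.Icc (0 : ℝ) 1) (hq : q ∈ Set.Icc (0 : ℝ) 1) :
    IntervalIntegrable (fun t => F a t * DV a t) volume p q := by
  have hsub : uIcc p q ⊆ Set.Icc 0 1 := uIcc_subset_Icc hp hq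
  refine IntervalIntegrable.continuousOn_mul ?_ ((h.continuousOn_alloc a).mono hsub)
  exact intervalIntegral.intervalIntegrable_deriv_of_nonneg ((h.continuousOn_val a).mono hsub)
    (fun x hx => h.hasDerivAt_val a
      (Ioo_subset_Ioo (le_min hp.1 hq.1) (max_le hp.2 hq.2) hx))
    (fun x hx => h.deriv_nonneg a (hsub (Ioo_subset_Icc_self hx)))

end OwnSignalRegular

end PerAlternative

section Aggregate

variable {ι : Type*} [Fintype ι]

def stieltjesSum (V F : ι → ℝ → ℝ) (σ : ℕ → ℝ) (m : ℕ) : ℝ :=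
  ∑ k ∈ range m, expVal (fun a => V a (σ (k + 1)) - V a (σ k)) (fun a => F a (σ (k + 1)))

theorem stieltjesSum_succ (V F : ι → ℝ → ℝ) (σ : ℕ → ℝ) (m : ℕ) :
    stieltjesSum V F σ (m + 1) = stieltjesSum V F σ m +
      expVal (fun a => V a (σ (m + 1)) - V a (σ m)) (fun a => F a (σ (m + 1))) :=
  sum_range_succ _ _

theorem sum_expVal_eq_stieltjesSum (V F : ι → ℝ → ℝ) {σ : ℕ → ℝ} {ℓ : ℕ} (hσ : σ ℓ = σ 0) :
    ∑ k ∈ range ℓ, expVal (fun a => V a (σ k)) (fun a => F a (σ k) - F a (σ (k + 1))) =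
      stieltjesSum V F σ ℓ := by
  let Φ k := expVal (fun a => V a (σ k)) (fun a => F a (σ k))
  have hterm : ∀ k, expVal (fun a => V a (σ k)) (fun a => F a (σ k) - F a (σ (k + 1))) =
      expVal (fun a => V a (σ (k + 1)) - V a (σ k)) (fun a => F a (σ (k + 1))) +
        (Φ k - Φ (k + 1)) := by
    intro k
    simp only [Φ, expVal, ← sum_sub_distrib, ← sum_add_distrib]
    exact sum_congr rfl fun a _ => by ring
  rw [sum_congr rfl fun k _ => hterm k, sum_add_distrib, sum_range_sub']
  simp only [Φ, hσ, sub_self, add_zero]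
  rfl

def CycleMonotone (V F : ι → ℝ → ℝ) : Prop :=
  ∀ ℓ : ℕ, 2 ≤ ℓ → ∀ σ : ℕ → ℝ, (∀ k ≤ ℓ, σ k ∈ Set.Icc (0 : ℝ) 1) → σ ℓ = σ 0 →
    ∑ k ∈ range ℓ, expVal (fun a => V a (σ k)) (fun a => F a (σ k) - F a (σ (k + 1))) ≥ 0

def WeakSingleCrossing (V DV F : ι → ℝ → ℝ) : Prop :=
  ∀ x ∈ Set.Icc (0 : ℝ) 1, ∀ z ∈ Set.Icc (0 : ℝ) 1,
    expVal (fun a => V a z - V a x) (fun a => F a z) ≥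
      ∫ t in x..z, expVal (fun a => DV a t) (fun a => F a t)

theorem CycleMonotone.stieltjesSum_add_nonneg {V F : ι → ℝ → ℝ} (hc : CycleMonotone V F)
    {σ : ℕ → ℝ} {m : ℕ} (hm : m ≠ 0) (hσ : ∀ k ≤ m, σ k ∈ Set.Icc (0 : ℝ) 1) :
    0 ≤ stieltjesSum V F σ m + expVal (fun a => V a (σ 0) - V a (σ m)) (fun a => F a (σ 0)) := by
  set τ := Function.update σ (m + 1) (σ 0)
  have hτ : ∀ k ≤ m, τ k = σ k := fun k hk => Function.update_of_ne (by omega) _ _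
  have hτ_last : τ (m + 1) = σ 0 := Function.update_self _ _ _
  have hτ_mem : ∀ k ≤ m + 1, τ k ∈ Set.Icc (0 : ℝ) 1 := by
    intro k hk
    rcases Nat.le_succ_iff.1 hk with hk | rfl
    · exact hτ k hk ▸ hσ k hk
    · exact hτ_last ▸ hσ 0 (Nat.zero_le m)
  have hsum : stieltjesSum V F τ m = stieltjesSum V F σ m :=
    sum_congr rfl fun k hk => by
      rw [hτ k (mem_range.1 hk).le, hτ (k + 1) (mem_range.1 hk)]
  have hclosed : τ (m + 1) = τ 0 := by rw [hτ_last, hτ 0 (Nat.zero_le m)]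
  have hcyc := hc (m + 1) (by omega) τ hτ_mem hclosed
  rwa [sum_expVal_eq_stieltjesSum V F hclosed, stieltjesSum_succ, hsum, hτ_last,
    hτ m le_rfl] at hcyc

namespace OwnSignalRegular

variable {V DV F : ι → ℝ → ℝ}

theorem intervalIntegrable_expVal (h : OwnSignalRegular V DV F) {p q : ℝ}
    (hp : p ∈ Set.Icc (0 : ℝ) 1) (hq : q ∈ Set.Icc (0 : ℝ) 1) :
    IntervalIntegrable (fun t => expVal (fun a => DV a t) (fun a => F a t)) volume p q := by
  have := IntervalIntegrable.sum univ fun a _ => h.intervalIntegrable_mul a hp hq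
  simpa only [expVal, ← Finset.sum_fn] using this

theorem abs_expVal_sub_integral_le (h : OwnSignalRegular V DV F) {p q ε : ℝ}
    (hp : p ∈ Set.Icc (0 : ℝ) 1) (hq : q ∈ Set.Icc (0 : ℝ) 1)
    (hε : ∀ a, ∀ r ∈ uIcc p q, |F a q - F a r| ≤ ε) :
    |expVal (fun a => V a q - V a p) (fun a => F a q) -
        ∫ t in p..q, expVal (fun a => DV a t) (fun a => F a t)| ≤
      ε * ∑ a, |V a q - V a p| := by
  simp only [expVal]
  rw [intervalIntegral.integral_finsetSum fun a _ => h.intervalIntegrable_mul a hp hq,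
    ← sum_sub_distrib, mul_sum]
  exact (abs_sum_le_sum_abs _ _).trans
    (sum_le_sum fun a _ => h.abs_mul_sub_integral_le a hp hq (hε a))

theorem abs_stieltjesSum_sub_integral_le (h : OwnSignalRegular V DV F) {σ : ℕ → ℝ} {m : ℕ}
    {ε : ℝ} (hσ : ∀ k ≤ m, σ k ∈ Set.Icc (0 : ℝ) 1)
    (hε : ∀ k < m, ∀ a, ∀ r ∈ uIcc (σ k) (σ (k + 1)), |F a (σ (k + 1)) - F a r| ≤ ε) :
    |stieltjesSum V F σ m - ∫ t in σ 0..σ m, expVal (fun a => DV a t) (fun a => F a t)| ≤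
      ε * ∑ k ∈ range m, ∑ a, |V a (σ (k + 1)) - V a (σ k)| := by
  rw [← intervalIntegral.sum_integral_adjacent_intervals fun k hk =>
      h.intervalIntegrable_expVal (hσ k hk.le) (hσ (k + 1) hk),
    stieltjesSum, ← sum_sub_distrib, mul_sum]
  exact (abs_sum_le_sum_abs _ _).trans (sum_le_sum fun k hk =>
    h.abs_expVal_sub_integral_le (hσ k (mem_range.1 hk).le) (hσ (k + 1) (mem_range.1 hk))
      (hε k (mem_range.1 hk)))

theorem tendsto_stieltjesSum_uniformPartition (h : OwnSignalRegular V DV F) {p q : ℝ}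
    (hp : p ∈ Set.Icc (0 : ℝ) 1) (hq : q ∈ Set.Icc (0 : ℝ) 1) :
    Tendsto (fun m => stieltjesSum V F (uniformPartition p q m) m) atTop
      (𝓝 (∫ t in p..q, expVal (fun a => DV a t) (fun a => F a t))) := by
  rw [Metric.tendsto_atTop]
  intro ε hε
  set K := ∑ a, |V a q - V a p|
  have hK : 0 ≤ K := sum_nonneg fun _ _ => abs_nonneg _
  obtain ⟨δ, hδ, hmod⟩ := isCompact_Icc.exists_forall_dist_le_of_continuousOn
    h.continuousOn_alloc (div_pos hε (by linarith : 0 < K + 1))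
  obtain ⟨N, hN⟩ := exists_nat_gt (|q - p| / δ)
  refine ⟨N + 1, fun m hm => ?_⟩
  have hm₀ : m ≠ 0 := by omega
  have hP : ∀ k ≤ m, uniformPartition p q m k ∈ Set.Icc (0 : ℝ) 1 :=
    fun k hk => uIcc_subset_Icc hp hq (uniformPartition_mem_uIcc p q hk)
  have hstep : |(q - p) / m| ≤ δ := by
    have : (N : ℝ) + 1 ≤ m := by exact_mod_cast hm
    rw [div_lt_iff₀ hδ] at hN
    rw [abs_div, Nat.abs_cast, div_le_iff₀ (by positivity)]
    nlinarith
  have hmodP : ∀ k < m, ∀ a, ∀ r ∈ uIcc (uniformPartition p q m k) (uniformPartition p q m (k + 1)),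
      |F a (uniformPartition p q m (k + 1)) - F a r| ≤ ε / (K + 1) := by
    intro k hk a r hr
    rw [← Real.dist_eq]
    refine hmod a _ (hP _ hk) r (uIcc_subset_Icc (hP k hk.le) (hP _ hk) hr) ?_
    refine (Real.dist_le_of_mem_uIcc right_mem_uIcc hr).trans ?_
    rwa [Real.dist_eq, abs_sub_comm, uniformPartition_succ_sub]
  have hvar : ∑ k ∈ range m, ∑ a, |V a (uniformPartition p q m (k + 1)) -
      V a (uniformPartition p q m k)| = K := by
    rw [sum_comm]
    refine sum_congr rfl fun a _ => ?_
    rw [(h.monotoneOn_val a).sum_range_abs_sub_comp hP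
      (uniformPartition_monotone_or_antitone p q m), uniformPartition_zero,
      uniformPartition_self p q hm₀]
  have hbound := h.abs_stieltjesSum_sub_integral_le hP hmodP
  rw [uniformPartition_zero, uniformPartition_self p q hm₀, hvar] at hbound
  rw [Real.dist_eq]
  calc _ ≤ ε / (K + 1) * K := hbound
    _ < ε := by
      rw [div_mul_eq_mul_div, div_lt_iff₀ (by linarith)]
      nlinarith

theorem cycleMonotone_of_weakSingleCrossing (h : OwnSignalRegular V DV F)
    (hw : WeakSingleCrossing V DV F) : CycleMonotone V F := by
  intro ℓ _ σ hσ hcyc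
  rw [sum_expVal_eq_stieltjesSum V F hcyc, ge_iff_le]
  calc (0 : ℝ) = ∫ t in σ 0..σ ℓ, expVal (fun a => DV a t) (fun a => F a t) := by
        rw [hcyc, intervalIntegral.integral_same]
    _ = ∑ k ∈ range ℓ, ∫ t in σ k..σ (k + 1), expVal (fun a => DV a t) (fun a => F a t) :=
        (intervalIntegral.sum_integral_adjacent_intervals fun k hk =>
          h.intervalIntegrable_expVal (hσ k hk.le) (hσ (k + 1) hk)).symm
    _ ≤ stieltjesSum V F σ ℓ := sum_le_sum fun k hk =>
        hw _ (hσ k (mem_range.1 hk).le) _ (hσ (k + 1) (mem_range.1 hk))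

theorem weakSingleCrossing_of_cycleMonotone (h : OwnSignalRegular V DV F)
    (hc : CycleMonotone V F) : WeakSingleCrossing V DV F := by
  intro x hx z hz
  set E := expVal (fun a => V a z - V a x) (fun a => F a z)
  have hclosed : ∀ᶠ m in atTop, 0 ≤ stieltjesSum V F (uniformPartition z x m) m + E := by
    filter_upwards [eventually_ne_atTop 0] with m hm
    simpa only [uniformPartition_zero, uniformPartition_self z x hm] using
      hc.stieltjesSum_add_nonneg hm fun k hk =>
        uIcc_subset_Icc hz hx (uniformPartition_mem_uIcc z x hk)
  have hlim := ge_of_tendsto ((h.tendsto_stieltjesSum_uniformPartition hz hx).add_const E) hclosed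
  rw [ge_iff_le, intervalIntegral.integral_symm]
  linarith

theorem cycleMonotone_iff_weakSingleCrossing (h : OwnSignalRegular V DV F) :
    CycleMonotone V F ↔ WeakSingleCrossing V DV F :=
  ⟨h.weakSingleCrossing_of_cycleMonotone, h.cycleMonotone_of_weakSingleCrossing⟩

end OwnSignalRegular

end Aggregate

theorem InSig.update {s : Fin n → ℝ} (hs : InSig s) (i : Fin n) {t : ℝ}
    (ht : t ∈ Set.Icc (0 : ℝ) 1) : InSig (Function.update s i t) := by
  intro j
  rcases eq_or_ne j i with rfl | hj
  · simpa using ht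
  · rw [Function.update_of_ne hj]
    exact hs j

theorem OwnSignalRegular.of_isOwnDeriv {ι : Type*} {v dv : Fin n → ι → (Fin n → ℝ) → ℝ}
    {f : (Fin n → ℝ) → ι → ℝ} {df : Fin n → (Fin n → ℝ) → ι → ℝ}
    (hv : ValidVals v) (hdv : IsOwnDeriv v dv) (hdf : IsOwnDerivF f df) (i : Fin n)
    {s : Fin n → ℝ} (hs : InSig s) :
    OwnSignalRegular (fun a t => v i a (Function.update s i t))
      (fun a t => dv i a (Function.update s i t)) (fun a t => f (Function.update s i t) a) where
  monotoneOn_val a _ ht _ ht' htt' := hv.2 i a i s hs _ _ ht ht' htt'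
  hasDerivWithinAt_val a t ht := by
    simpa only [Function.update_idem, Function.update_self] using hdv i a _ (hs.update i ht)
  continuousOn_alloc a t ht := by
    simpa only [Function.update_idem, Function.update_self] using
      (hdf i _ a (hs.update i ht)).continuousWithinAt

theorem cMon_iff_forall_cycleMonotone {v : Fin n → A → (Fin n → ℝ) → ℝ}
    {f : (Fin n → ℝ) → A → ℝ} :
    CMon v f ↔ ∀ i (s : Fin n → ℝ), InSig s →
      CycleMonotone (fun a t => v i a (Function.update s i t))
        (fun a t => f (Function.update s i t) a) :=
  Iff.rfl

theorem weakFSC_iff_forall_weakSingleCrossing {v dv : Fin n → A → (Fin n → ℝ) → ℝ}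
    {f : (Fin n → ℝ) → A → ℝ} :
    WeakFSC v dv f ↔ ∀ i (s : Fin n → ℝ), InSig s →
      WeakSingleCrossing (fun a t => v i a (Function.update s i t))
        (fun a t => dv i a (Function.update s i t)) (fun a t => f (Function.update s i t) a) := by
  refine forall_congr' fun i => ⟨fun h s hs x hx z hz => ?_, fun h s hs z hz => ?_⟩
  · simpa only [Function.update_idem, Function.update_self] using
      h (Function.update s i x) (hs.update i hx) z hz
  · simpa only [Function.update_eq_self] using h s hs (s i) (hs i) z hz

theorem cmon_iff_weak_fsc_general
    (v dv : Fin n → A → (Fin n → ℝ) → ℝ)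
    (f : (Fin n → ℝ) → A → ℝ) (df : Fin n → (Fin n → ℝ) → A → ℝ)
    (hv : ValidVals v) (hdv : IsOwnDeriv v dv)
    (hdf : IsOwnDerivF f df) :
    CMon v f ↔ WeakFSC v dv f := by
  rw [cMon_iff_forall_cycleMonotone, weakFSC_iff_forall_weakSingleCrossing]
  exact forall₂_congr fun i s => forall_congr' fun hs =>
    (OwnSignalRegular.of_isOwnDeriv hv hdv hdf i hs).cycleMonotone_iff_weakSingleCrossing

/-- `f` satisfies cycle monotonicity (C-Mon) iff the profile `v`
satisfies weak `f`-single-crossing. -/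
theorem cmon_iff_weak_fsc
    (v dv : Fin n → A → (Fin n → ℝ) → ℝ)
    (f : (Fin n → ℝ) → A → ℝ) (df : Fin n → (Fin n → ℝ) → A → ℝ)
    (hv : ValidVals v) (hdv : IsOwnDeriv v dv)
    (hf : IsDistr f) (hdf : IsOwnDerivF f df) :
    CMon v f ↔ WeakFSC v dv f :=
  cmon_iff_weak_fsc_general v dv f df hv hdv hdf
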